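/- arXiv:1603.08655 — 3 statements merged into one kernel-verified Lean document; each statement's English description precedes it below -/
import Mathlib

section
/- Every galled network with n leaves has at most 6n − 5 nodes in total. -/
/-!
Framework for rooted phylogenetic networks, formalized as directed graphs
given by an adjacency relation `A : V → V → Prop` on a vertex type `V`,
with a distinguished root `ρ`.  Leaves are identified with their (unique)
labels, i.e. the labelling is the identity on leaf vertices.
-/

namespace PhyloNet

variable {V : Type} {W : Type}

/-- Indegree of a vertex. -/
noncomputable def inDeg (A : V → V → Prop) (v : V) : ℕ := {u | A u v}.ncard

/-- Outdegree of a vertex. -/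
noncomputable def outDeg (A : V → V → Prop) (v : V) : ℕ := {w | A v w}.ncard

/-- `p` is a directed path (walk) from `u` to `v`, given as the list of its vertices. -/
def IsPath (A : V → V → Prop) (u v : V) (p : List V) : Prop :=
  p.Chain' A ∧ p.head? = some u ∧ p.getLast? = some v

/-- `A` with root `ρ` is a phylogenetic network: a finite rooted acyclic digraph whose
root has indegree 0 and outdegree ≥ 2, from which every node is reachable, and in which
every non-root node is either a leaf (indegree 1, outdegree 0), an internal tree node
(indegree 1, outdegree ≥ 2) or a reticulation (indegree ≥ 2, outdegree 1). -/
structure IsNetwork (A : V → V → Prop) (ρ : V) : Prop where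
  finite : Finite V
  acyclic : ∀ v, ¬ Relation.TransGen A v v
  root_indeg : inDeg A ρ = 0
  root_outdeg : 2 ≤ outDeg A ρ
  reach_from_root : ∀ v, Relation.ReflTransGen A ρ v
  degree_cond : ∀ v, v ≠ ρ →
    (inDeg A v = 1 ∧ (outDeg A v = 0 ∨ 2 ≤ outDeg A v)) ∨ (2 ≤ inDeg A v ∧ outDeg A v = 1)

/-- Reticulation node: indegree ≥ 2 and outdegree 1. -/
def IsRet (A : V → V → Prop) (v : V) : Prop := 2 ≤ inDeg A v ∧ outDeg A v = 1

/-- Leaf: indegree 1 and outdegree 0. -/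
def IsLeaf (A : V → V → Prop) (v : V) : Prop := inDeg A v = 1 ∧ outDeg A v = 0

/-- Tree node: any node that is not a reticulation node. -/
def IsTreeNode (A : V → V → Prop) (v : V) : Prop := ¬ IsRet A v

/-- `u` is visible on `v`: every directed path from the root `ρ` to `v` contains `u`. -/
def Visible (A : V → V → Prop) (ρ u v : V) : Prop := ∀ p, IsPath A ρ v p → u ∈ p

/-- A network is reticulation-visible if every reticulation node is visible on some leaf. -/
def RetVisible (A : V → V → Prop) (ρ : V) : Prop :=
  ∀ r, IsRet A r → ∃ ℓ, IsLeaf A ℓ ∧ Visible A ρ r ℓ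

/-- Undirected adjacency in the subgraph `N − R(N)` induced on tree nodes. -/
def TAdj (A : V → V → Prop) (u v : V) : Prop :=
  IsTreeNode A u ∧ IsTreeNode A v ∧ (A u v ∨ A v u)

/-- `S` is a tree node component: a connected component (ignoring directions) of the
subgraph induced on the tree nodes. -/
def IsTNC (A : V → V → Prop) (S : Set V) : Prop :=
  ∃ u, IsTreeNode A u ∧ S = {v | Relation.ReflTransGen (TAdj A) u v}

/-- `r` is the root of the tree node component `S`: it lies in `S` and has indegree 0
within `N − R(N)`, i.e. it has no tree-node parent. -/
def CompRoot (A : V → V → Prop) (S : Set V) (r : V) : Prop :=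
  r ∈ S ∧ ∀ u, IsTreeNode A u → ¬ A u r

/-- Tree node component `C'` is below tree node component `C''`. -/
def Below (A : V → V → Prop) (C' C'' : Set V) : Prop :=
  ∃ r, IsRet A r ∧ (∃ c, A r c ∧ CompRoot A C' c) ∧ (∃ p ∈ C'', A p r)

/-- A big tree node component: a tree node component with at least two nodes. -/
def BigTNC (A : V → V → Prop) (C : Set V) : Prop :=
  IsTNC A C ∧ ∃ a ∈ C, ∃ b ∈ C, a ≠ b

/-- A single-leaf component: its node set is `{ℓ}` for some leaf `ℓ`. -/
def SingleLeafTNC (A : V → V → Prop) (C : Set V) : Prop :=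
  ∃ ℓ, IsLeaf A ℓ ∧ C = {ℓ}

/-- A lowest big tree node component: a big tree node component `C` such that every
tree node component whose root is a proper descendant of the root of `C` is a
single-leaf component. -/
def LowestBig (A : V → V → Prop) (C : Set V) : Prop :=
  BigTNC A C ∧ ∀ C' r' rC, IsTNC A C' → CompRoot A C' r' → CompRoot A C rC →
    Relation.TransGen A rC r' → SingleLeafTNC A C'

/-- An inner reticulation: all of its parents lie in one and the same tree node component. -/
def InnerRet (A : V → V → Prop) (r : V) : Prop :=
  IsRet A r ∧ ∃ S, IsTNC A S ∧ ∀ p, A p r → p ∈ S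

/-- `IR(C)`: reticulations all of whose parents lie in `C`. -/
def IRset (A : V → V → Prop) (C : Set V) : Set V :=
  {r | IsRet A r ∧ ∀ p, A p r → p ∈ C}

/-- `CR(C)`: reticulations with at least one parent in `C` and at least one parent outside `C`. -/
def CRset (A : V → V → Prop) (C : Set V) : Set V :=
  {r | IsRet A r ∧ (∃ p, A p r ∧ p ∈ C) ∧ (∃ p, A p r ∧ p ∉ C)}

/-- `L_C`: the leaves of the network lying in `C` together with the children of the
inner reticulations below `C`. -/
def LCset (A : V → V → Prop) (C : Set V) : Set V :=
  {ℓ | ℓ ∈ C ∧ IsLeaf A ℓ} ∪ {x | ∃ r ∈ IRset A C, A r x}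

/-- Bicombining: every reticulation node has indegree exactly 2. -/
def Bicombining (A : V → V → Prop) : Prop := ∀ r, IsRet A r → inDeg A r = 2

/-- Galled: every reticulation node `r` has an ancestor `u` admitting two
internal-node-disjoint directed paths from `u` to `r` in which every node other
than `r` is a tree node. -/
def Galled (A : V → V → Prop) : Prop :=
  ∀ r, IsRet A r → ∃ u, Relation.TransGen A u r ∧ ∃ p₁ p₂ : List V,
    IsPath A u r p₁ ∧ IsPath A u r p₂ ∧ p₁ ≠ p₂ ∧
    (∀ x, x ∈ p₁ → x ∈ p₂ → x = u ∨ x = r) ∧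
    (∀ x ∈ p₁, x ≠ r → IsTreeNode A x) ∧ (∀ x ∈ p₂, x ≠ r → IsTreeNode A x)

/-- Restriction of a digraph to a vertex subset. -/
def Restrict (A : V → V → Prop) (S : Set V) : V → V → Prop :=
  fun a b => a ∈ S ∧ b ∈ S ∧ A a b

/-- Descendants of `u` (including `u`); the vertex set of the subnetwork `D_N(u)`. -/
def Desc (A : V → V → Prop) (u : V) : Set V := {v | Relation.ReflTransGen A u v}

/-- Binary network: the root has outdegree 2, leaves have degree 1, and every other
node has total degree 3. -/
def IsBinary (A : V → V → Prop) (ρ : V) : Prop :=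
  outDeg A ρ = 2 ∧ ∀ v, v ≠ ρ →
    (inDeg A v = 1 ∧ outDeg A v = 0) ∨ (inDeg A v = 1 ∧ outDeg A v = 2) ∨
    (inDeg A v = 2 ∧ outDeg A v = 1)

/-- A phylogenetic tree: a network with no reticulation nodes. -/
def IsPhyloTree (A : W → W → Prop) (ρ : W) : Prop :=
  IsNetwork A ρ ∧ ∀ w, ¬ IsRet A w

/-- A node with indegree 1 and outdegree 1 (a suppressible node). -/
def Deg11 (A : V → V → Prop) (v : V) : Prop := inDeg A v = 1 ∧ outDeg A v = 1

/-- There is a directed path from `a` to `b` (of length ≥ 1) all of whose internal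
nodes are suppressible. -/
def SubdivPath (A : V → V → Prop) (a b : V) : Prop :=
  ∃ p : List V, IsPath A a b p ∧ 2 ≤ p.length ∧ ∀ z ∈ p, z ≠ a → z ≠ b → Deg11 A z

/-- `φ` witnesses that the digraph `A'` on the vertex set `S` is a subdivision of the
tree `AT` restricted to the vertex set `SW`: `φ` injectively maps the tree nodes onto
the non-suppressible nodes, edges of the tree correspond exactly to directed paths
whose internal nodes are suppressible, and leaves are mapped according to the leaf
correspondence `θ` (same labels). -/
def SubdivWitness (A' : V → V → Prop) (S : Set V) (AT : W → W → Prop) (SW : Set W)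
    (θ : W → V) (φ : W → V) : Prop :=
  Set.InjOn φ SW ∧ (∀ w ∈ SW, φ w ∈ S) ∧
  (∀ x ∈ S, ¬ Deg11 (Restrict A' S) x → ∃ w ∈ SW, φ w = x) ∧
  (∀ x ∈ SW, ∀ y ∈ SW, (Restrict AT SW x y ↔ SubdivPath (Restrict A' S) (φ x) (φ y))) ∧
  (∀ w ∈ SW, outDeg (Restrict AT SW) w = 0 → φ w = θ w)

/-- The digraph `A'` on vertex set `S` is a subdivision of the tree `AT` on `SW`. -/
def IsSubdivisionOf (A' : V → V → Prop) (S : Set V) (AT : W → W → Prop) (SW : Set W)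
    (θ : W → V) : Prop :=
  ∃ φ, SubdivWitness A' S AT SW θ φ

/-- `E`, `D`, `φ` witness that the subnetwork of `A` on vertex set `S` displays the
subtree of `AT` on vertex set `SW`: `E` is a set of reticulation edges of the
subnetwork containing all but one of the incoming edges of each reticulation node of
the subnetwork, `D` is a set of deleted nodes, and `φ` witnesses that the result is a
subdivision of the subtree. -/
def DisplayWitness (A : V → V → Prop) (S : Set V) (AT : W → W → Prop) (SW : Set W)
    (θ : W → V) (E : Set (V × V)) (D : Set V) (φ : W → V) : Prop :=
  (∀ e ∈ E, Restrict A S e.1 e.2 ∧ 2 ≤ inDeg (Restrict A S) e.2) ∧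
  (∀ r ∈ S, 2 ≤ inDeg (Restrict A S) r →
     ∃ p, Restrict A S p r ∧ (p, r) ∉ E ∧ ∀ q, Restrict A S q r → q ≠ p → (q, r) ∈ E) ∧
  SubdivWitness (fun a b => Restrict A S a b ∧ (a, b) ∉ E) (S \ D) AT SW θ φ

/-- The subnetwork of `A` on vertex set `S` displays the subtree of `AT` on `SW`. -/
def DisplaysOn (A : V → V → Prop) (S : Set V) (AT : W → W → Prop) (SW : Set W)
    (θ : W → V) : Prop :=
  ∃ E D φ, DisplayWitness A S AT SW θ E D φ

/-- The leaves of the subnetwork of `A` induced on vertex set `S`. -/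
def SubLeaves (A : V → V → Prop) (S : Set V) : Set V :=
  {v | v ∈ S ∧ outDeg (Restrict A S) v = 0}

/-- `B` is a soft cluster in the subnetwork of `A` on vertex set `S`: `B` is the
cluster of some node of some phylogenetic tree displayed by that subnetwork. -/
def SoftClusterOn (A : V → V → Prop) (S : Set V) (B : Set V) : Prop :=
  ∃ (W : Type) (AT : W → W → Prop) (ρT : W) (θ : W → V),
    IsPhyloTree AT ρT ∧
    Set.BijOn θ {w | IsLeaf AT w} (SubLeaves A S) ∧
    DisplaysOn A S AT Set.univ θ ∧
    ∃ x : W, θ '' {w | IsLeaf AT w ∧ Relation.ReflTransGen AT x w} = B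

/-- `B` is a soft cluster of the node `u` of `N`: there are `E` and `D` as in the
definition of display such that `u` is a node of `(N − E) − D` and the set of leaves
of `N` below `u` in `(N − E) − D` equals `B`. -/
def SoftClusterAt (A : V → V → Prop) (u : V) (B : Set V) : Prop :=
  ∃ (E : Set (V × V)) (D : Set V),
    (∀ e ∈ E, A e.1 e.2 ∧ 2 ≤ inDeg A e.2) ∧
    (∀ r, 2 ≤ inDeg A r → ∃ p, A p r ∧ (p, r) ∉ E ∧ ∀ q, A q r → q ≠ p → (q, r) ∈ E) ∧
    (∃ (W : Type) (AT : W → W → Prop) (ρT : W) (θ : W → V),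
      IsPhyloTree AT ρT ∧ Set.BijOn θ {w | IsLeaf AT w} {v | IsLeaf A v} ∧
      IsSubdivisionOf (fun a b => A a b ∧ (a, b) ∉ E) (Set.univ \ D) AT Set.univ θ) ∧
    u ∉ D ∧
    {ℓ | IsLeaf A ℓ ∧
      Relation.ReflTransGen (fun a b => A a b ∧ (a, b) ∉ E ∧ a ∉ D ∧ b ∉ D) u ℓ} = B

/-- `w` is the lowest common ancestor of the set `X` in the (tree-like) digraph `A`. -/
def IsLCAIn (A : V → V → Prop) (X : Set V) (w : V) : Prop :=
  (∀ x ∈ X, Relation.ReflTransGen A w x) ∧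
  ∀ w', (∀ x ∈ X, Relation.ReflTransGen A w' x) → Relation.ReflTransGen A w' w

end PhyloNet

/-!
Split the nodes into the root, the leaves `L`, the reticulations `R` and the internal tree
nodes. Every reticulation has indegree 2, so comparing indegree and outdegree sums gives
`|V| + 1 ≤ 2|L| + 2|R|`.

To bound `|R|`, consider the tree node components. Each has a unique root, which is either `ρ`
or the child of a reticulation, so there are `|R| + 1` of them. Galledness puts both parents of a
reticulation into one component. A component containing no leaf has a lowest node, all of whose
(at least two) children are reticulations, so it contains both parents of at least two
reticulations. Hence `|R| + 1 ≤ |L| + |R| / 2`, that is `|R| ≤ 2|L| - 2`, and `|V| ≤ 6|L| - 5`.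
-/

namespace PhyloNet

open Relation Finset

variable {V : Type} {A : V → V → Prop} {ρ : V}

lemma wellFounded_of_acyclic [Finite V] (hA : ∀ v, ¬ TransGen A v v) : WellFounded A := by
  have : IsTrans V (TransGen A) := ⟨fun _ _ _ => TransGen.trans⟩
  have : Std.Irrefl (TransGen A) := ⟨hA⟩
  exact Subrelation.wf TransGen.single (Finite.wellFounded_of_trans_of_irrefl _)

lemma ncard_setOf_eq_card_filter [Fintype V] (P : V → Prop) [DecidablePred P] :
    {v | P v}.ncard = #{v | P v} := by
  rw [← Set.ncard_coe_finset]
  simp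

lemma sum_inDeg_eq_sum_outDeg [Fintype V] (A : V → V → Prop) :
    ∑ v, inDeg A v = ∑ v, outDeg A v := by
  classical
  simp only [inDeg, outDeg, ncard_setOf_eq_card_filter, card_filter]
  exact sum_comm

lemma subsingleton_parents {v : V} (hv : inDeg A v = 1) : {u | A u v}.Subsingleton := by
  obtain ⟨c, hc⟩ := Set.ncard_eq_one.mp hv
  exact hc ▸ Set.subsingleton_singleton

lemma subsingleton_children {v : V} (hv : outDeg A v = 1) : {w | A v w}.Subsingleton := by
  obtain ⟨c, hc⟩ := Set.ncard_eq_one.mp hv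
  exact hc ▸ Set.subsingleton_singleton

lemma eq_or_eq_of_inDeg_eq_two {r x₁ x₂ p : V} (hr : inDeg A r = 2) (hne : x₁ ≠ x₂)
    (h₁ : A x₁ r) (h₂ : A x₂ r) (hp : A p r) : p = x₁ ∨ p = x₂ := by
  have hfin : {u | A u r}.Finite := Set.finite_of_ncard_pos (by rw [inDeg] at hr; omega)
  have hpair : {x₁, x₂} = {u | A u r} :=
    Set.eq_of_subset_of_ncard_le (Set.insert_subset h₁ (Set.singleton_subset_iff.mpr h₂))
      (by rw [Set.ncard_pair hne]; exact hr.le) hfin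
  have hp' : p ∈ ({x₁, x₂} : Set V) := hpair ▸ hp
  simpa using hp'

lemma IsPath.nodup (hA : ∀ v, ¬ TransGen A v v) {u v : V} {p : List V} (hp : IsPath A u v p) :
    p.Nodup := by
  have : Std.Irrefl (TransGen A) := ⟨hA⟩
  exact (hp.1.imp fun _ _ => TransGen.single).pairwise.nodup

lemma IsPath.exists_eq_append_pair {u v : V} {p : List V} (hp : IsPath A u v p) (huv : u ≠ v) :
    ∃ q x, p = q ++ [x, v] := by
  obtain ⟨ys, rfl⟩ := List.getLast?_eq_some_iff.mp hp.2.2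
  rcases ys.eq_nil_or_concat with rfl | ⟨q, x, rfl⟩
  · exact absurd (by simpa [IsPath] using hp.2.1) huv.symm
  · exact ⟨q, x, by simp⟩

lemma IsPath.penultimate_of_isTreeNode (hA : ∀ v, ¬ TransGen A v v) {u r x : V} {q : List V}
    (hp : IsPath A u r (q ++ [x, r])) (ht : ∀ z ∈ q ++ [x, r], z ≠ r → IsTreeNode A z) :
    A x r ∧ IsTreeNode A x ∧ ReflTransGen (TAdj A) u x := by
  have hnd := hp.nodup hA
  obtain ⟨hc, hh, -⟩ := hp
  rw [show q ++ [x, r] = (q ++ [x]) ++ [r] by simp] at hc hnd hh ht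
  rw [List.head?_append_of_ne_nil _ (by simp)] at hh
  have htree : ∀ z ∈ q ++ [x], IsTreeNode A z := fun z hz =>
    ht z (List.mem_append_left _ hz) ((List.nodup_append.mp hnd).2.2 z hz r (by simp))
  have hchain : (q ++ [x]).IsChain (TAdj A) := hc.left_of_append.imp_of_mem_imp
    fun a b ha hb hab => ⟨htree a ha, htree b hb, Or.inl hab⟩
  refine ⟨(List.isChain_append.mp hc).2.2 x (by simp) r (by simp), htree x (by simp), ?_⟩
  refine List.IsChain.induction (ReflTransGen (TAdj A) u ·) _ hchain
    (fun _ _ hab hu => hu.tail hab) (fun hne => ?_) x (by simp)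
  rw [(List.head_eq_iff_head?_eq_some hne).mpr hh]

instance : Std.Symm (TAdj A) := ⟨fun _ _ h => ⟨h.2.1, h.1, h.2.2.symm⟩⟩

lemma Galled.exists_distinct_parents (hN : IsNetwork A ρ) (hg : Galled A) {r : V}
    (hr : IsRet A r) : ∃ x₁ x₂, x₁ ≠ x₂ ∧ A x₁ r ∧ A x₂ r ∧ IsTreeNode A x₁ ∧
      IsTreeNode A x₂ ∧ ReflTransGen (TAdj A) x₁ x₂ := by
  obtain ⟨u, hur, p₁, p₂, hp₁, hp₂, hne, hdisj, ht₁, ht₂⟩ := hg r hr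
  have hu : u ≠ r := by rintro rfl; exact hN.acyclic u hur
  obtain ⟨q₁, x₁, rfl⟩ := hp₁.exists_eq_append_pair hu
  obtain ⟨q₂, x₂, rfl⟩ := hp₂.exists_eq_append_pair hu
  obtain ⟨hx₁, htx₁, hux₁⟩ := hp₁.penultimate_of_isTreeNode hN.acyclic ht₁
  obtain ⟨hx₂, htx₂, hux₂⟩ := hp₂.penultimate_of_isTreeNode hN.acyclic ht₂
  refine ⟨x₁, x₂, ?_, hx₁, hx₂, htx₁, htx₂, (Std.Symm.symm _ _ hux₁).trans hux₂⟩
  rintro rfl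
  -- a common penultimate node is `u`, and then both paths are `[u, r]`
  obtain rfl : x₁ = u := (hdisj x₁ (by simp) (by simp)).resolve_right
    fun h => hN.acyclic r (by rw [h] at hx₁; exact .single hx₁)
  have hq : ∀ q, IsPath A x₁ r (q ++ [x₁, r]) → q = [] := by
    rintro (_ | ⟨a, q⟩) hp
    · rfl
    have hnd := hp.nodup hN.acyclic
    obtain rfl : a = x₁ := by simpa [IsPath] using hp.2.1
    simp at hnd
  exact hne (by rw [hq _ hp₁, hq _ hp₂])

lemma Galled.isTreeNode_of_adj (hN : IsNetwork A ρ) (hbi : Bicombining A) (hg : Galled A)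
    {r p : V} (hr : IsRet A r) (hp : A p r) : IsTreeNode A p := by
  obtain ⟨x₁, x₂, hne, h₁, h₂, ht₁, ht₂, -⟩ := hg.exists_distinct_parents hN hr
  rcases eq_or_eq_of_inDeg_eq_two (hbi r hr) hne h₁ h₂ hp with rfl | rfl
  exacts [ht₁, ht₂]

lemma Galled.treeConn_of_adj (hN : IsNetwork A ρ) (hbi : Bicombining A) (hg : Galled A)
    {r p q : V} (hr : IsRet A r) (hp : A p r) (hq : A q r) : ReflTransGen (TAdj A) p q := by
  obtain ⟨x₁, x₂, hne, h₁, h₂, -, -, hx⟩ := hg.exists_distinct_parents hN hr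
  have hx' := Std.Symm.symm _ _ hx
  rcases eq_or_eq_of_inDeg_eq_two (hbi r hr) hne h₁ h₂ hp with rfl | rfl <;>
    rcases eq_or_eq_of_inDeg_eq_two (hbi r hr) hne h₁ h₂ hq with rfl | rfl <;>
    first | exact .refl | assumption

/-- `IsTNCRoot A t` is `CompRoot A S t` for the tree node component `S` of `t`. -/
def IsTNCRoot (A : V → V → Prop) (t : V) : Prop :=
  IsTreeNode A t ∧ ∀ u, IsTreeNode A u → ¬ A u t

namespace IsNetwork

lemma not_adj_root (hN : IsNetwork A ρ) (u : V) : ¬ A u ρ := by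
  have := hN.finite
  have h := hN.root_indeg
  rw [inDeg, Set.ncard_eq_zero] at h
  exact Set.eq_empty_iff_forall_notMem.mp h u

lemma isTreeNode_root (hN : IsNetwork A ρ) : IsTreeNode A ρ := fun h => by
  have := hN.root_indeg; have := h.1; omega

lemma inDeg_eq_one (hN : IsNetwork A ρ) {v : V} (hv : IsTreeNode A v) (hvρ : v ≠ ρ) :
    inDeg A v = 1 :=
  ((hN.degree_cond v hvρ).resolve_right hv).1

lemma two_le_outDeg (hN : IsNetwork A ρ) {v : V} (hv : IsTreeNode A v) (hℓ : ¬ IsLeaf A v) :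
    2 ≤ outDeg A v := by
  by_cases hvρ : v = ρ
  · exact hvρ ▸ hN.root_outdeg
  · obtain ⟨h1, h0 | h2⟩ := (hN.degree_cond v hvρ).resolve_right hv
    exacts [absurd ⟨h1, h0⟩ hℓ, h2]

-- Summed over all nodes, the degree sums cancel and this becomes `card_add_one_le`.
lemma inDeg_add_le [DecidableEq V] [DecidablePred (IsLeaf A)] [DecidablePred (IsRet A)]
    (hN : IsNetwork A ρ) (hbi : Bicombining A) (v : V) :
    1 + inDeg A v + (if v = ρ then 1 else 0) ≤
      outDeg A v + 2 * (if IsLeaf A v then 1 else 0) + 2 * (if IsRet A v then 1 else 0) := by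
  by_cases hvρ : v = ρ
  · subst hvρ
    have := hN.root_outdeg
    have := hN.root_indeg
    split_ifs <;> simp_all [IsLeaf, IsRet]
  · have := hbi v
    rcases hN.degree_cond v hvρ with ⟨h1, h0 | h2⟩ | hret <;>
      split_ifs <;> simp_all [IsLeaf, IsRet]

lemma card_add_one_le (hN : IsNetwork A ρ) (hbi : Bicombining A) :
    Nat.card V + 1 ≤ 2 * {v | IsLeaf A v}.ncard + 2 * {v | IsRet A v}.ncard := by
  classical
  have := hN.finite
  have := Fintype.ofFinite V
  have h := sum_le_sum fun v (_ : v ∈ univ) => hN.inDeg_add_le hbi v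
  simp only [sum_add_distrib, sum_ite_eq', mem_univ, if_true] at h
  simp only [← mul_sum, sum_boole, sum_const, card_univ, smul_eq_mul, sum_inDeg_eq_sum_outDeg,
    Nat.cast_id] at h
  rw [ncard_setOf_eq_card_filter, ncard_setOf_eq_card_filter, Nat.card_eq_fintype_card]
  omega

lemma wellFounded_swap (hN : IsNetwork A ρ) : WellFounded (Function.swap A) :=
  have := hN.finite
  wellFounded_of_acyclic fun v h => hN.acyclic v (transGen_swap.mp h)

lemma reflTransGen_of_isTNCRoot (hN : IsNetwork A ρ) {t v : V} (ht : IsTNCRoot A t)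
    (h : ReflTransGen (TAdj A) t v) : ReflTransGen (fun a b => A a b ∧ IsTreeNode A a) t v := by
  induction h with
  | refl => exact .refl
  | @tail u w _ hadj ih =>
    obtain ⟨hu, hw, huw | hwu⟩ := hadj
    · exact ih.tail ⟨huw, hu⟩
    -- stepping up to the parent `w` of `u` retraces the last step of the path to `u`
    · rcases ih.cases_tail with rfl | ⟨x, hx, hxu, -⟩
      · exact absurd hwu (ht.2 w hw)
      · have hu₁ := hN.inDeg_eq_one hu fun h => hN.not_adj_root w (h ▸ hwu)
        exact subsingleton_parents hu₁ hxu hwu ▸ hx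

lemma isTNCRoot_eq (hN : IsNetwork A ρ) {t₁ t₂ : V} (h₁ : IsTNCRoot A t₁) (h₂ : IsTNCRoot A t₂)
    (h : ReflTransGen (TAdj A) t₁ t₂) : t₁ = t₂ := by
  rcases (hN.reflTransGen_of_isTNCRoot h₁ h).cases_tail with h | ⟨w, -, hw, hwt⟩
  · exact h.symm
  · exact absurd hw (h₂.2 w hwt)

lemma exists_sink (hN : IsNetwork A ρ) {v : V} (hv : IsTreeNode A v) :
    ∃ s, IsTreeNode A s ∧ ReflTransGen (TAdj A) v s ∧ ∀ w, A s w → IsRet A w := by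
  induction v using hN.wellFounded_swap.induction with
  | _ v ih =>
    by_cases h : ∃ w, A v w ∧ IsTreeNode A w
    · obtain ⟨w, hvw, hw⟩ := h
      obtain ⟨s, hs, hws, hsink⟩ := ih w hvw hw
      exact ⟨s, hs, .head ⟨hv, hw, .inl hvw⟩ hws, hsink⟩
    · push Not at h
      exact ⟨v, hv, .refl, fun w hw => not_not.mp (h w hw)⟩

lemma isTNCRoot_of_adj (hN : IsNetwork A ρ) (hbi : Bicombining A) (hg : Galled A) {r c : V}
    (hr : IsRet A r) (hrc : A r c) : IsTNCRoot A c := by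
  have hcρ : c ≠ ρ := by rintro rfl; exact hN.not_adj_root r hrc
  have hc : IsTreeNode A c := fun hc => hg.isTreeNode_of_adj hN hbi hc hrc hr
  exact ⟨hc, fun u hu huc => hu (subsingleton_parents (hN.inDeg_eq_one hc hcρ) huc hrc ▸ hr)⟩

lemma ncard_isTNCRoot (hN : IsNetwork A ρ) (hbi : Bicombining A) (hg : Galled A) :
    {t | IsTNCRoot A t}.ncard = {r | IsRet A r}.ncard + 1 := by
  classical
  have := hN.finite
  have := Fintype.ofFinite V
  have hρ : ρ ∈ ({t | IsTNCRoot A t} : Finset V) :=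
    mem_filter.mpr ⟨mem_univ ρ, hN.isTreeNode_root, fun u _ => hN.not_adj_root u⟩
  rw [ncard_setOf_eq_card_filter, ncard_setOf_eq_card_filter, ← card_erase_add_one hρ]
  congr 1
  -- the reticulations are exactly the parents of the non-root component roots
  apply le_antisymm
  · refine card_le_card_of_forall_subsingleton (fun t r => A r t) (fun t ht => ?_)
      fun r hr => (subsingleton_children (by simpa using hr : IsRet A r).2).anti fun t ht => ht.2
    obtain ⟨htρ, ht⟩ : t ≠ ρ ∧ IsTNCRoot A t := by simpa using ht
    obtain ⟨r, hr⟩ := Set.nonempty_of_ncard_ne_zero (hN.inDeg_eq_one ht.1 htρ ▸ one_ne_zero)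
    exact ⟨r, by simpa using not_not.mp fun h => ht.2 r h hr, hr⟩
  · refine card_le_card_of_forall_subsingleton (fun r t => A r t) (fun r hr => ?_) fun t ht => ?_
    · have hr : IsRet A r := by simpa using hr
      obtain ⟨c, hc⟩ := Set.nonempty_of_ncard_ne_zero (hr.2 ▸ one_ne_zero)
      refine ⟨c, ?_, hc⟩
      simpa using ⟨fun h => hN.not_adj_root r (h ▸ hc), hN.isTNCRoot_of_adj hbi hg hr hc⟩
    · obtain ⟨htρ, ht⟩ : t ≠ ρ ∧ IsTNCRoot A t := by simpa using ht
      exact (subsingleton_parents (hN.inDeg_eq_one ht.1 htρ)).anti fun r hr => hr.2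

lemma two_mul_ncard_isTNCRoot_le (hN : IsNetwork A ρ) (hbi : Bicombining A) (hg : Galled A) :
    2 * {t | IsTNCRoot A t}.ncard ≤ 2 * {v | IsLeaf A v}.ncard + {r | IsRet A r}.ncard := by
  classical
  have := hN.finite
  have := Fintype.ofFinite V
  simp only [ncard_setOf_eq_card_filter]
  set HasLeaf : V → Prop := fun t => ∃ ℓ, IsLeaf A ℓ ∧ ReflTransGen (TAdj A) t ℓ
  rw [← card_filter_add_card_filter_not fun t => HasLeaf t]
  -- a component with a leaf is determined by that leaf
  have hleaf : #{t ∈ {t | IsTNCRoot A t} | HasLeaf t} ≤ #{v | IsLeaf A v} := by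
    refine card_le_card_of_forall_subsingleton (fun t ℓ => ReflTransGen (TAdj A) t ℓ)
      (fun t ht => ?_) fun ℓ _ t₁ ht₁ t₂ ht₂ => ?_
    · obtain ⟨-, ℓ, hℓ, htℓ⟩ := mem_filter.mp ht
      exact ⟨ℓ, mem_filter.mpr ⟨mem_univ ℓ, hℓ⟩, htℓ⟩
    · simp only [mem_filter, mem_univ, true_and, Set.mem_ofPred_eq] at ht₁ ht₂
      exact hN.isTNCRoot_eq ht₁.1.1 ht₂.1.1 (ht₁.2.trans (Std.Symm.symm _ _ ht₂.2))
  -- a component without a leaf contains both parents of at least two reticulations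
  have hret : #{t ∈ {t | IsTNCRoot A t} | ¬ HasLeaf t} * 2 ≤ #{r | IsRet A r} * 1 := by
    refine card_mul_le_card_mul (fun t r => ∃ p, A p r ∧ ReflTransGen (TAdj A) t p)
      (fun t ht => ?_) fun r hr => card_le_one.mpr fun t₁ ht₁ t₂ ht₂ => ?_
    · obtain ⟨ht, hnl⟩ := mem_filter.mp ht
      obtain ⟨s, hs, hts, hsink⟩ := hN.exists_sink (mem_filter.mp ht).2.1
      have hsl : ¬ IsLeaf A s := fun hsl => hnl ⟨s, hsl, hts⟩
      obtain ⟨w₁, hw₁, w₂, hw₂, hne⟩ :=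
        (Set.one_lt_ncard (Set.toFinite _)).mp (hN.two_le_outDeg hs hsl)
      exact one_lt_card.mpr ⟨w₁, by simpa using ⟨hsink w₁ hw₁, s, hw₁, hts⟩,
        w₂, by simpa using ⟨hsink w₂ hw₂, s, hw₂, hts⟩, hne⟩
    · simp only [mem_bipartiteBelow, mem_filter, mem_univ, true_and] at ht₁ ht₂
      obtain ⟨⟨h₁, -⟩, p₁, hp₁, ht₁⟩ := ht₁
      obtain ⟨⟨h₂, -⟩, p₂, hp₂, ht₂⟩ := ht₂
      have hr : IsRet A r := (mem_filter.mp hr).2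
      exact hN.isTNCRoot_eq h₁ h₂
        ((ht₁.trans (hg.treeConn_of_adj hN hbi hr hp₁ hp₂)).trans (Std.Symm.symm _ _ ht₂))
  omega

end IsNetwork

/-- Every galled network with `n` leaves has at most `6n − 5` nodes in total. -/
theorem galled_node_bound {V : Type} (A : V → V → Prop) (ρ : V)
    (hN : IsNetwork A ρ) (hbi : Bicombining A) (hg : Galled A)
    (n : ℕ) (hn : {v | IsLeaf A v}.ncard = n) :
    Nat.card V ≤ 6 * n - 5 := by
  have hV := hN.card_add_one_le hbi
  have hT := hN.ncard_isTNCRoot hbi hg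
  have hT' := hN.two_mul_ncard_isTNCRoot_le hbi hg
  omega

end PhyloNet
end

section
/- Let N be a galled network. Then every tree node component of N other than the component containing the root ρ(N) is below exactly one tree node component of N; consequently, the tree node components of N under the below-relation form a rooted tree. -/
/-!
Let `c` be the root of `C`. As `c ≠ ρ` has no tree-node parent, its parent `r` is a
reticulation, and `r` is unique because a tree node has indegree one; `c` is unique because
every node of `C` is reached from it along directed edges. In a galled bicombining network
the two parents of `r` are the last nodes of the two paths of a gall, which consist of tree
nodes and start at a common node, so both lie in one tree node component: this is the only
component that `C` is below.
-/

namespace PhyloNet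

variable {V : Type} {A : V → V → Prop}

instance inst_s11 : Std.Symm (TAdj A) := ⟨fun _ _ h => ⟨h.2.1, h.1, h.2.2.symm⟩⟩

lemma eq_of_reflTransGen_of_reflTransGen (hacyc : ∀ v, ¬ Relation.TransGen A v v) {a b : V}
    (hab : Relation.ReflTransGen A a b) (hba : Relation.ReflTransGen A b a) : a = b := by
  rcases hab.cases_head with rfl | ⟨m, ham, hmb⟩
  · rfl
  · exact (hacyc a ((Relation.TransGen.head' ham hmb).trans_left hba)).elim

lemma IsRet.exists_parent {r : V} (hr : IsRet A r) : ∃ p, A p r :=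
  Set.nonempty_of_ncard_ne_zero (s := {p | A p r}) (by have := hr.1; unfold inDeg at this; omega)

namespace IsPath

variable {u v : V} {p : List V}

lemma pairwise_transGen (hp : IsPath A u v p) : p.Pairwise (Relation.TransGen A) :=
  List.isChain_iff_pairwise.mp ((hp.1 : p.IsChain A).imp fun _ _ => Relation.TransGen.single)

lemma reflTransGen_mem (hp : IsPath A u v p) :
    Relation.ReflTransGen (fun a b => a ∈ p ∧ b ∈ p ∧ A a b) u v := by
  obtain ⟨t, rfl⟩ := List.head?_eq_some_iff.mp hp.2.1
  refine List.relationReflTransGen_of_exists_isChain_cons t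
    (List.IsChain.iff_mem.mp (hp.1 : (u :: t).IsChain A)) ?_
  simpa [List.getLast?_eq_some_getLast] using hp.2.2

lemma eq_singleton (hacyc : ∀ v, ¬ Relation.TransGen A v v) (hp : IsPath A u u p) :
    p = [u] := by
  obtain ⟨t, rfl⟩ := List.head?_eq_some_iff.mp hp.2.1
  rcases eq_or_ne t [] with rfl | ht
  · rfl
  have hlast : t.getLast ht = u := by
    simpa [List.getLast?_eq_some_getLast, List.getLast_cons ht] using hp.2.2
  have hu := List.rel_of_pairwise_cons hp.pairwise_transGen (List.getLast_mem ht)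
  exact (hacyc u (hlast ▸ hu)).elim

lemma exists_eq_append_singleton (hp : IsPath A u v p) (huv : u ≠ v) :
    ∃ q x, p = q ++ [v] ∧ IsPath A u x q ∧ A x v := by
  obtain ⟨q, rfl⟩ := List.getLast?_eq_some_iff.mp hp.2.2
  have hq : q ≠ [] := by
    rintro rfl
    exact huv (by simpa using hp.2.1.symm)
  obtain ⟨hchain, -, hlast⟩ := List.isChain_append.mp (hp.1 : (q ++ [v]).IsChain A)
  refine ⟨q, q.getLast hq, rfl, ⟨hchain, ?_, List.getLast?_eq_some_getLast hq⟩, ?_⟩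
  · rw [← List.head?_append_of_ne_nil q hq]
    exact hp.2.1
  · exact hlast _ (List.getLast?_eq_some_getLast hq) v rfl

lemma exists_last_edge (hacyc : ∀ v, ¬ Relation.TransGen A v v) {r : V} (hp : IsPath A u r p)
    (hur : u ≠ r) (htree : ∀ x ∈ p, x ≠ r → IsTreeNode A x) :
    ∃ x ∈ p, x ≠ r ∧ A x r ∧ Relation.ReflTransGen (TAdj A) u x ∧ (x = u → p = [u, r]) := by
  obtain ⟨q, x, rfl, hq, hxr⟩ := hp.exists_eq_append_singleton hur
  have hrq : r ∉ q := fun h =>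
    hacyc r ((List.pairwise_append.mp hp.pairwise_transGen).2.2 r h r (List.mem_singleton_self r))
  have hqtree : ∀ y ∈ q, IsTreeNode A y := fun y hy =>
    htree y (List.mem_append_left _ hy) (ne_of_mem_of_not_mem hy hrq)
  have hxq : x ∈ q := List.mem_of_getLast? hq.2.2
  refine ⟨x, List.mem_append_left _ hxq, ne_of_mem_of_not_mem hxq hrq, hxr, ?_, ?_⟩
  · refine Relation.ReflTransGen.mono ?_ _ _ hq.reflTransGen_mem
    exact fun a b (h : a ∈ q ∧ b ∈ q ∧ A a b) => ⟨hqtree a h.1, hqtree b h.2.1, Or.inl h.2.2⟩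
  · rintro rfl
    rw [hq.eq_singleton hacyc]
    rfl

end IsPath

theorem Galled.innerRet (hacyc : ∀ v, ¬ Relation.TransGen A v v) (hbi : Bicombining A)
    (hg : Galled A) {r : V} (hr : IsRet A r) : InnerRet A r := by
  obtain ⟨u, hur, p₁, p₂, hp₁, hp₂, hne, hdisj, ht₁, ht₂⟩ := hg r hr
  have hur : u ≠ r := by
    rintro rfl
    exact hacyc u hur
  obtain ⟨x₁, hx₁, hx₁r, hA₁, hux₁, heq₁⟩ := hp₁.exists_last_edge hacyc hur ht₁
  obtain ⟨x₂, hx₂, -, hA₂, hux₂, heq₂⟩ := hp₂.exists_last_edge hacyc hur ht₂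
  have hx : x₁ ≠ x₂ := by
    rintro rfl
    rcases hdisj x₁ hx₁ hx₂ with h | h
    · exact hne ((heq₁ h).trans (heq₂ h).symm)
    · exact hx₁r h
  -- with indegree two, the ends of the two gall paths are all the parents of `r`
  have hparents : {q | A q r} = {x₁, x₂} := by
    refine (Set.eq_of_subset_of_ncard_le ?_ ?_ ?_).symm
    · rintro q (rfl | rfl) <;> assumption
    · rw [Set.ncard_pair hx, ← inDeg, hbi r hr]
    · exact Set.finite_of_ncard_ne_zero (by rw [← inDeg, hbi r hr]; decide)
  refine ⟨hr, {v | Relation.ReflTransGen (TAdj A) u v},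
    ⟨u, ht₁ u (List.mem_of_mem_head? hp₁.2.1) hur, rfl⟩, fun q hq => ?_⟩
  have hq : q ∈ ({x₁, x₂} : Set V) := hparents ▸ hq
  rcases hq with rfl | rfl
  exacts [hux₁, hux₂]

namespace IsTNC

variable {S T : Set V}

lemma isTreeNode (hS : IsTNC A S) {v : V} (hv : v ∈ S) : IsTreeNode A v := by
  obtain ⟨u, hu, rfl⟩ := hS
  induction hv with
  | refl => exact hu
  | tail _ h _ => exact h.2.1

lemma eq_setOf_of_mem (hS : IsTNC A S) {x : V} (hx : x ∈ S) :
    S = {v | Relation.ReflTransGen (TAdj A) x v} := by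
  obtain ⟨u, -, rfl⟩ := hS
  ext v
  exact ⟨fun h => (symm hx).trans h, hx.trans⟩

lemma eq_of_mem (hS : IsTNC A S) (hT : IsTNC A T) {x : V} (hxS : x ∈ S) (hxT : x ∈ T) :
    S = T := by
  rw [hS.eq_setOf_of_mem hxS, hT.eq_setOf_of_mem hxT]

lemma exists_compRoot (hwf : WellFounded A) (hS : IsTNC A S) : ∃ c, CompRoot A S c := by
  obtain ⟨c, hc, hmin⟩ := hwf.has_min S (by obtain ⟨u, -, rfl⟩ := hS; exact ⟨u, .refl⟩)
  refine ⟨c, hc, fun t ht htc => hmin t ?_ htc⟩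
  rw [hS.eq_setOf_of_mem hc]
  exact .single ⟨hS.isTreeNode hc, ht, Or.inr htc⟩

end IsTNC

namespace IsNetwork

variable {ρ : V}

lemma wellFounded (hN : IsNetwork A ρ) : WellFounded A := by
  have := hN.finite
  have : Std.Irrefl (Relation.TransGen A) := ⟨hN.acyclic⟩
  exact Subrelation.wf Relation.TransGen.single (Finite.wellFounded_of_trans_of_irrefl _)

lemma exists_parent (hN : IsNetwork A ρ) {v : V} (hv : v ≠ ρ) : ∃ u, A u v := by
  refine Set.nonempty_of_ncard_ne_zero (s := {u | A u v}) ?_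
  rcases hN.degree_cond v hv with ⟨h, -⟩ | ⟨h, -⟩ <;> unfold inDeg at h <;> omega

lemma eq_of_adj_of_isTreeNode (hN : IsNetwork A ρ) {a b v : V} (hv : IsTreeNode A v)
    (ha : A a v) (hb : A b v) : a = b := by
  have := hN.finite
  have hle : inDeg A v ≤ 1 := by
    rcases eq_or_ne v ρ with rfl | hvρ
    · simp [hN.root_indeg]
    · rcases hN.degree_cond v hvρ with ⟨h, -⟩ | hret
      · exact h.le
      · exact absurd hret hv
  exact (Set.ncard_le_one (Set.toFinite _)).mp hle a ha b hb

/-- Since a tree node has at most one parent, an undirected path inside the component can be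
followed downwards from its root. -/
lemma reflTransGen_of_compRoot (hN : IsNetwork A ρ) {S : Set V} {c v : V} (hS : IsTNC A S)
    (hc : CompRoot A S c) (hv : v ∈ S) : Relation.ReflTransGen A c v := by
  rw [hS.eq_setOf_of_mem hc.1] at hv
  induction hv with
  | refl => exact .refl
  | @tail b d _ hbd ih =>
    obtain ⟨hb, hd, hbd | hdb⟩ := hbd
    · exact ih.tail hbd
    · rcases ih.cases_tail with rfl | ⟨t, hct, htb⟩
      · exact absurd hdb (hc.2 d hd)
      · rwa [hN.eq_of_adj_of_isTreeNode hb hdb htb]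

lemma compRoot_unique (hN : IsNetwork A ρ) {S : Set V} {c₁ c₂ : V} (hS : IsTNC A S)
    (h₁ : CompRoot A S c₁) (h₂ : CompRoot A S c₂) : c₁ = c₂ :=
  eq_of_reflTransGen_of_reflTransGen hN.acyclic (hN.reflTransGen_of_compRoot hS h₁ h₂.1)
    (hN.reflTransGen_of_compRoot hS h₂ h₁.1)

end IsNetwork

/-- In a galled network, every tree node component other than the one containing the
root is below exactly one tree node component (so the components form a rooted tree
under the below-relation). -/
theorem galled_component_unique_parent {V : Type} (A : V → V → Prop) (ρ : V)
    (hN : IsNetwork A ρ) (hbi : Bicombining A) (hg : Galled A)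
    (C : Set V) (hC : IsTNC A C) (hρ : ρ ∉ C) :
    ∃! C'' : Set V, IsTNC A C'' ∧ Below A C C'' := by
  obtain ⟨c, hc⟩ := hC.exists_compRoot hN.wellFounded
  obtain ⟨r, hrc⟩ := hN.exists_parent (v := c) fun h => hρ (h ▸ hc.1)
  have hr : IsRet A r := not_not.mp fun h => hc.2 r h hrc
  obtain ⟨-, S, hS, hparents⟩ := Galled.innerRet hN.acyclic hbi hg hr
  obtain ⟨p, hpr⟩ := hr.exists_parent
  refine ⟨S, ⟨hS, r, hr, ⟨c, hrc, hc⟩, p, hparents p hpr, hpr⟩, ?_⟩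
  rintro T ⟨hT, r', -, ⟨c', hr'c', hc'⟩, p', hp'T, hp'r'⟩
  obtain rfl : c' = c := hN.compRoot_unique hC hc' hc
  obtain rfl : r' = r := hN.eq_of_adj_of_isTreeNode (hC.isTreeNode hc.1) hr'c' hrc
  exact hT.eq_of_mem hS hp'T (hparents p' hp'r')

end PhyloNet
end

section
/- Let N be a binary reticulation-visible network, C a lowest big tree node component of N, T a binary phylogenetic tree with L(T) = L(N), ℓ ∈ L_C, and let v_1, …, v_t, v_{t+1} be the unique directed path in T from v_1 = ρ(T) to v_{t+1} = ℓ, with T_i the subtree of T branching off this path at v_i for 1 ≤ i ≤ t and T_{t+1} = {ℓ}. Set s_C = min{ s : L(T_s) ∩ L_C ≠ ∅ }. If N displays T, then the subnetwork D_N(ρ(C)) displays the subtree D_T(v_{s_C}). -/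
/-!
Fix a display of `T` in `N`: sets `E`, `D` and a map `φ` identifying `T` with a subdivision inside
`(N − E) − D`. The heart of the proof is that `φ (v s_C)` lies below `ρ(C)`.

Because `C` is lowest, a reticulation strictly below `ρ(C)` from which a leaf of `L_C` can be
reached has all its parents in `C`. Hence a path into a leaf of `L_C` that starts outside
`D_N(ρ(C))` must pass through `ρ(C)`. Take a leaf of `L_C` in `T_{s_C}` together with `ℓ`: either
`φ (v s_C)` is below `ρ(C)`, or `ρ(C)` reaches both leaves in `(N − E) − D`. In the second case,
follow the suppressible nodes below `ρ(C)` down to the image of a tree vertex. That vertex is a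
common ancestor of both leaves in `T`, hence an ancestor of their lowest common ancestor `v s_C`,
so `ρ(C)` reaches `φ (v s_C)` after all.

The nodes reachable from `φ (v s_C)` in `(N − E) − D` then carry a display of `D_T(v s_C)` by
`D_N(ρ(C))`. The reticulation edges to delete are those of `E`, except at reticulations whose
kept parent lies outside `D_N(ρ(C))`, where some other parent is kept instead.
-/

namespace PhyloNet

open Relation

variable {V W : Type}

section Degrees

variable {G : V → V → Prop} {S : Set V} {a b c x y : V}

lemma eq_of_inDeg_eq_one (h : inDeg G y = 1) (ha : G a y) (hb : G b y) : a = b := by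
  obtain ⟨c, hc⟩ := Set.ncard_eq_one.mp h
  exact (hc ▸ Set.subsingleton_singleton : {u | G u y}.Subsingleton) ha hb

lemma eq_of_outDeg_eq_one (h : outDeg G y = 1) (ha : G y a) (hb : G y b) : a = b := by
  obtain ⟨c, hc⟩ := Set.ncard_eq_one.mp h
  exact (hc ▸ Set.subsingleton_singleton : {w | G y w}.Subsingleton) ha hb

lemma inDeg_eq_one_of_unique (hc : G c y) (h : ∀ a, G a y → a = c) : inDeg G y = 1 :=
  Set.ncard_eq_one.mpr ⟨c, Set.ext fun a => ⟨h a, fun ha => ha ▸ hc⟩⟩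

lemma exists_adj_of_inDeg_eq_one (h : inDeg G y = 1) : ∃ c, G c y :=
  Set.nonempty_of_ncard_ne_zero (h.symm ▸ one_ne_zero : inDeg G y ≠ 0)

lemma exists_adj_of_outDeg_eq_one (h : outDeg G y = 1) : ∃ c, G y c :=
  Set.nonempty_of_ncard_ne_zero (h.symm ▸ one_ne_zero : outDeg G y ≠ 0)

lemma outDeg_restrict (hy : y ∈ S) (hS : ∀ w, G y w → w ∈ S) :
    outDeg (Restrict G S) y = outDeg G y := by
  unfold outDeg
  congr 1
  ext w
  exact ⟨fun h => h.2.2, fun h => ⟨hy, hS w h, h⟩⟩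

lemma not_adj_of_outDeg_eq_zero [Finite V] (h : outDeg G y = 0) : ¬ G y c := fun hc =>
  ((Set.ncard_pos).mpr ⟨c, hc⟩).ne' h

lemma two_le_inDeg [Finite V] (ha : G a y) (hb : G b y) (hne : a ≠ b) : 2 ≤ inDeg G y :=
  (Set.one_lt_ncard_iff).mpr ⟨a, b, ha, hb, hne⟩

lemma restrict_univ : Restrict G Set.univ = G := by
  funext a b
  simp [Restrict]

lemma desc_restrict_subset (hx : x ∈ S) : Desc (Restrict G S) x ⊆ S := fun y hy => by
  rcases hy.cases_tail with rfl | ⟨c, -, hcy⟩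
  exacts [hx, hcy.2.1]

lemma mem_of_reach_restrict (h : ReflTransGen (Restrict G S) x y) (hy : y ∈ S) : x ∈ S := by
  rcases h.cases_head with rfl | ⟨c, hxc, -⟩
  exacts [hy, hxc.1]

end Degrees

section Paths

variable {G G' : V → V → Prop} {a b c : V} {p : List V}

lemma IsPath.reach_of_mem (h : IsPath G a b p) {z : V} (hz : z ∈ p) : ReflTransGen G a z :=
  List.IsChain.induction (ReflTransGen G a ·) p h.1 (fun _ _ hxy hx => hx.tail hxy)
    (fun hne => by rw [Option.some.inj ((List.head?_eq_some_head hne).symm.trans h.2.1)]) z hz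

lemma IsPath.backwards_induction {P : V → Prop} (h : IsPath G a b p) (hb : P b)
    (step : ∀ x ∈ p, ∀ y, G x y → P y → P x) : P a :=
  List.IsChain.backwards_induction P p (List.IsChain.iff_mem.mp h.1)
    (fun x y hxy hy => step x hxy.1 y hxy.2.2 hy)
    (fun hne => by rwa [Option.some.inj ((List.getLast?_eq_some_getLast hne).symm.trans h.2.2)])
    a (List.mem_of_mem_head? h.2.1)

lemma IsPath.mono_of_mem (h : IsPath G a b p) (hG : ∀ x ∈ p, ∀ y ∈ p, G x y → G' x y) :
    IsPath G' a b p :=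
  ⟨List.IsChain.imp_of_mem_imp (fun x y hx hy => hG x hx y hy) h.1, h.2⟩

lemma IsPath.snoc (h : IsPath G a b p) (hbc : G b c) : IsPath G a c (p ++ [c]) := by
  have hne : p ≠ [] := by rintro rfl; simp [IsPath] at h
  refine ⟨List.isChain_append.mpr ⟨h.1, .singleton c, ?_⟩, ?_, List.getLast?_concat⟩
  · simp only [h.2.2, Option.mem_def, Option.some.injEq, List.head?_cons]
    rintro x rfl y rfl
    exact hbc
  · rw [List.head?_append_of_ne_nil _ hne, h.2.1]

lemma SubdivPath.reach (h : SubdivPath G a b) : ReflTransGen G a b :=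
  let ⟨_, hp, _⟩ := h
  hp.reach_of_mem (List.mem_of_getLast? hp.2.2)

lemma subdivPath_of_adj (h : G a b) : SubdivPath G a b :=
  ⟨[a, b], ⟨.cons_cons h (.singleton b), rfl, rfl⟩, le_rfl,
    fun _ hz ha hb => ((List.mem_pair.mp hz).elim ha hb).elim⟩

lemma SubdivPath.snoc (h : SubdivPath G a b) (hb : Deg11 G b) (hbc : G b c) :
    SubdivPath G a c := by
  obtain ⟨p, hp, hlen, hint⟩ := h
  refine ⟨p ++ [c], hp.snoc hbc, by simp; omega, fun z hz hza hzc => ?_⟩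
  rcases List.mem_append.mp hz with hz | hz
  · by_cases hzb : z = b
    exacts [hzb ▸ hb, hint z hz hza hzb]
  · exact absurd (List.mem_singleton.mp hz) hzc

end Paths

section ForcedWalks

def Deg11Step (G : V → V → Prop) (a b : V) : Prop := G a b ∧ Deg11 G a

variable {G : V → V → Prop} {a b e g : V}

lemma SubdivPath.deg11Step_walk (h : SubdivPath G a b) (ha : Deg11 G a) :
    ReflTransGen (Deg11Step G) a b := by
  obtain ⟨p, hp, -, hint⟩ := h
  refine hp.backwards_induction (P := (ReflTransGen (Deg11Step G) · b)) .refl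
    fun x hx y hxy hy => ?_
  by_cases hxb : x = b
  · exact hxb ▸ .refl
  by_cases hxa : x = a
  · exact hy.head ⟨hxy, hxa ▸ ha⟩
  · exact hy.head ⟨hxy, hint x hx hxa hxb⟩

lemma exists_deg11Step_walk (h : ReflTransGen G a e) (he : ¬ Deg11 G e) :
    ∃ g, ReflTransGen (Deg11Step G) a g ∧ ¬ Deg11 G g := by
  induction h using ReflTransGen.head_induction_on with
  | refl => exact ⟨e, .refl, he⟩
  | @head a c hac _ ih =>
    obtain ⟨g, hcg, hg⟩ := ih
    by_cases ha : Deg11 G a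
    exacts [⟨g, hcg.head ⟨hac, ha⟩, hg⟩, ⟨a, .refl, ha⟩]

lemma eq_of_deg11Step_walks {g' : V} (h : ReflTransGen (Deg11Step G) a g) (hg : ¬ Deg11 G g)
    (h' : ReflTransGen (Deg11Step G) a g') (hg' : ¬ Deg11 G g') : g = g' := by
  induction h using ReflTransGen.head_induction_on with
  | refl =>
    rcases h'.cases_head with rfl | ⟨c, hac, -⟩
    exacts [rfl, absurd hac.2 hg]
  | @head a c hac _ ih =>
    rcases h'.cases_head with rfl | ⟨c', hac', hc'g'⟩
    · exact absurd hac.2 hg'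
    · exact ih (eq_of_outDeg_eq_one hac.2.2 hac'.1 hac.1 ▸ hc'g')

lemma reach_of_deg11Step_walk (h : ReflTransGen (Deg11Step G) a g)
    (he : ReflTransGen G a e) (he' : ¬ Deg11 G e) : ReflTransGen G g e := by
  induction h using ReflTransGen.head_induction_on with
  | refl => exact he
  | @head a c hac _ ih =>
    rcases he.cases_head with rfl | ⟨c', hac', hc'e⟩
    · exact absurd hac.2 he'
    · exact ih (eq_of_outDeg_eq_one hac.2.2 hac' hac.1 ▸ hc'e)

end ForcedWalks

section RestrictDesc

variable {G : V → V → Prop} {x₀ z a b : V}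

lemma deg11_restrict_desc_iff (huniq : ∀ a b y, G a y → G b y → a = b) (hx₀ : ¬ Deg11 G x₀)
    (hz : z ∈ Desc G x₀) : Deg11 (Restrict G (Desc G x₀)) z ↔ Deg11 G z := by
  unfold Deg11
  rw [outDeg_restrict hz fun w hw => hz.tail hw]
  refine and_congr_left fun hout => ⟨fun h => ?_, fun h => ?_⟩
  · obtain ⟨c, hc⟩ := exists_adj_of_inDeg_eq_one h
    exact inDeg_eq_one_of_unique hc.2.2 fun a ha => huniq a c z ha hc.2.2
  · obtain ⟨c, hc, hcz⟩ : ∃ c, c ∈ Desc G x₀ ∧ G c z := by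
      rcases hz.cases_tail with rfl | hc
      exacts [absurd ⟨h, hout⟩ hx₀, hc]
    exact inDeg_eq_one_of_unique ⟨hc, hz, hcz⟩ fun a ha => eq_of_inDeg_eq_one h ha.2.2 hcz

lemma subdivPath_restrict_desc_iff (huniq : ∀ a b y, G a y → G b y → a = b)
    (hx₀ : ¬ Deg11 G x₀) (ha : a ∈ Desc G x₀) :
    SubdivPath (Restrict G (Desc G x₀)) a b ↔ SubdivPath G a b := by
  have hmem : ∀ {p}, IsPath G a b p → ∀ z ∈ p, z ∈ Desc G x₀ :=
    fun hp _ hz => ha.trans (hp.reach_of_mem hz)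
  constructor
  · rintro ⟨p, hp, hlen, hint⟩
    have hp' : IsPath G a b p := hp.mono_of_mem fun _ _ _ _ h => h.2.2
    exact ⟨p, hp', hlen, fun z hz h₁ h₂ =>
      (deg11_restrict_desc_iff huniq hx₀ (hmem hp' z hz)).mp (hint z hz h₁ h₂)⟩
  · rintro ⟨p, hp, hlen, hint⟩
    exact ⟨p, hp.mono_of_mem fun x hx y hy h => ⟨hmem hp x hx, hmem hp y hy, h⟩, hlen,
      fun z hz h₁ h₂ => (deg11_restrict_desc_iff huniq hx₀ (hmem hp z hz)).mpr (hint z hz h₁ h₂)⟩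

end RestrictDesc

section Networks

variable {A : V → V → Prop} {ρ l : V} {AT : W → W → Prop} {ρT : W}

lemma IsNetwork.eq_of_adj_of_not_isRet {y u u' : V} (hN : IsNetwork A ρ)
    (hy : ¬ IsRet A y) (hu : A u y) (hu' : A u' y) : u = u' := by
  have := hN.finite
  by_cases hyρ : y = ρ
  · subst hyρ
    exact absurd hN.root_indeg ((Set.ncard_pos).mpr ⟨u, hu⟩).ne'
  · rcases hN.degree_cond y hyρ with ⟨h₁, -⟩ | hret
    exacts [eq_of_inDeg_eq_one h₁ hu hu', absurd hret hy]

lemma IsNetwork.isRet_of_adj_of_ne {y u u' : V} (hN : IsNetwork A ρ) (hu : A u y) (hu' : A u' y)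
    (hne : u ≠ u') : IsRet A y :=
  by_contra fun hy => hne (hN.eq_of_adj_of_not_isRet hy hu hu')

lemma IsLeaf.not_isRet (hl : IsLeaf A l) : ¬ IsRet A l := fun h =>
  zero_ne_one (hl.2.symm.trans h.2)

lemma IsPhyloTree.eq_of_adj (hT : IsPhyloTree AT ρT) : ∀ a b y, AT a y → AT b y → a = b :=
  fun _ _ y => hT.1.eq_of_adj_of_not_isRet (hT.2 y)

lemma IsPhyloTree.isLeaf_or_two_le_outDeg (hT : IsPhyloTree AT ρT) (w : W) :
    IsLeaf AT w ∨ 2 ≤ outDeg AT w := by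
  by_cases hw : w = ρT
  · exact .inr (hw ▸ hT.1.root_outdeg)
  · rcases hT.1.degree_cond w hw with ⟨h₁, h₀ | h₂⟩ | hret
    exacts [.inl ⟨h₁, h₀⟩, .inr h₂, absurd hret (hT.2 w)]

end Networks

section Trees

variable {AT : W → W → Prop} {a b c p x : W}

lemma reach_or_reach_of_common_desc (huniq : ∀ a b y, AT a y → AT b y → a = b)
    (ha : ReflTransGen AT a x) (hb : ReflTransGen AT b x) :
    ReflTransGen AT a b ∨ ReflTransGen AT b a := by
  induction ha using ReflTransGen.head_induction_on with
  | refl => exact .inr hb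
  | @head a c hac _ ih =>
    rcases ih with hcb | hbc
    · exact .inl (hcb.head hac)
    · rcases hbc.cases_tail with rfl | ⟨d, hbd, hdc⟩
      exacts [.inl (.single hac), .inr (huniq d a c hdc hac ▸ hbd)]

lemma not_reach_of_siblings (huniq : ∀ a b y, AT a y → AT b y → a = b)
    (hac : ∀ x, ¬ TransGen AT x x) (ha : AT p a) (hb : AT p b) (hne : a ≠ b) :
    ¬ ReflTransGen AT a b := fun h => by
  rcases h.cases_tail with rfl | ⟨d, had, hdb⟩
  · exact hne rfl
  · exact hac p (TransGen.head' ha (huniq d p b hdb hb ▸ had))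

lemma isLCAIn_of_branch (huniq : ∀ a b y, AT a y → AT b y → a = b)
    (hac : ∀ x, ¬ TransGen AT x x) (hpc : AT p c) (hpa : ReflTransGen AT p a)
    (hca : ¬ ReflTransGen AT c a) (hcb : ReflTransGen AT c b) : IsLCAIn AT {a, b} p := by
  refine ⟨by rintro x (rfl | rfl); exacts [hpa, hcb.head hpc], fun z hz => ?_⟩
  rcases reach_or_reach_of_common_desc huniq (hz a (by simp)) hpa with hzp | hpz
  · exact hzp
  rcases hpz.cases_head with rfl | ⟨c', hpc', hc'z⟩
  · exact .refl
  have hc'c : c' = c := by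
    by_contra hne
    rcases reach_or_reach_of_common_desc huniq (hc'z.trans (hz b (by simp))) hcb with h | h
    exacts [not_reach_of_siblings huniq hac hpc' hpc hne h,
      not_reach_of_siblings huniq hac hpc hpc' (Ne.symm hne) h]
  exact absurd (hc'c ▸ hc'z.trans (hz a (by simp))) hca

lemma reach_of_chain {v : ℕ → W} {t : ℕ} (hpath : ∀ i, 1 ≤ i → i ≤ t → AT (v i) (v (i + 1)))
    {i j : ℕ} (hi : 1 ≤ i) (hij : i ≤ j) (hj : j ≤ t + 1) : ReflTransGen AT (v i) (v j) := by
  induction j, hij using Nat.le_induction with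
  | base => exact .refl
  | succ j hij ih => exact (ih (by omega)).tail (hpath j (by omega) (by omega))

lemma wellFounded_swap_of_acyclic [Finite W] (hac : ∀ x, ¬ TransGen AT x x) :
    WellFounded (Function.swap AT) := by
  have : Std.Irrefl (TransGen (Function.swap AT)) := ⟨fun x h => hac x (transGen_swap.mp h)⟩
  exact Subrelation.wf TransGen.single (Finite.wellFounded_of_trans_of_irrefl _)

end Trees

section Subdivision

variable {R : V → V → Prop} {S : Set V} {AT : W → W → Prop} {θ φ : W → V} {u x y : W} {z : V}

lemma SubdivWitness.adj_iff (hφ : SubdivWitness R S AT Set.univ θ φ) :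
    AT x y ↔ SubdivPath (Restrict R S) (φ x) (φ y) := by
  rw [← hφ.2.2.2.1 x trivial y trivial, restrict_univ]

lemma SubdivWitness.eq_of_outDeg (hφ : SubdivWitness R S AT Set.univ θ φ)
    (h : outDeg AT x = 0) : φ x = θ x :=
  hφ.2.2.2.2 x trivial (by rwa [restrict_univ])

lemma SubdivWitness.reach (hφ : SubdivWitness R S AT Set.univ θ φ) (h : ReflTransGen AT x y) :
    ReflTransGen (Restrict R S) (φ x) (φ y) := by
  induction h with
  | refl => exact .refl
  | tail _ hxy ih => exact ih.trans (hφ.adj_iff.mp hxy).reach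

lemma SubdivWitness.exists_reach_eq (hφ : SubdivWitness R S AT Set.univ θ φ)
    (h : ReflTransGen (Restrict R S) (φ u) z) (hz : ¬ Deg11 (Restrict R S) z) :
    ∃ w, ReflTransGen AT u w ∧ φ w = z := by
  suffices key : ∀ z, ReflTransGen (Restrict R S) (φ u) z → ∃ w, ReflTransGen AT u w ∧
      (φ w = z ∨ SubdivPath (Restrict R S) (φ w) z ∧ Deg11 (Restrict R S) z) by
    obtain ⟨w, hw, hwz | ⟨-, hd⟩⟩ := key z h
    exacts [⟨w, hw, hwz⟩, absurd hd hz]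
  intro z h
  induction h with
  | refl => exact ⟨u, .refl, .inl rfl⟩
  | @tail z' z _ hz'z ih =>
    obtain ⟨w, hw, hwz'⟩ := ih
    have hpath : SubdivPath (Restrict R S) (φ w) z := by
      rcases hwz' with hwz' | ⟨hp, hd⟩
      exacts [subdivPath_of_adj (hwz' ▸ hz'z), hp.snoc hd hz'z]
    by_cases hd : Deg11 (Restrict R S) z
    · exact ⟨w, hw, .inr ⟨hpath, hd⟩⟩
    · obtain ⟨w', -, rfl⟩ := hφ.2.2.1 z hz'z.2.1 hd
      exact ⟨w', hw.tail (hφ.adj_iff.mpr hpath), .inl rfl⟩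

lemma SubdivWitness.not_deg11 {ρT : W} (hφ : SubdivWitness R S AT Set.univ θ φ)
    (hT : IsPhyloTree AT ρT) (hθ : ∀ w, IsLeaf AT w → ∀ z, ¬ Restrict R S (θ w) z) (x : W) :
    ¬ Deg11 (Restrict R S) (φ x) := by
  have := hT.1.finite
  refine (wellFounded_swap_of_acyclic hT.1.acyclic).induction
    (C := fun x => ¬ Deg11 (Restrict R S) (φ x)) x fun x ih hx => ?_
  rcases hT.isLeaf_or_two_le_outDeg x with hleaf | h₂
  · obtain ⟨z, hz⟩ := exists_adj_of_outDeg_eq_one hx.2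
    exact hθ x hleaf z (hφ.eq_of_outDeg hleaf.2 ▸ hz)
  · obtain ⟨c₁, c₂, h₁, h₂, hne⟩ := (Set.one_lt_ncard_iff).mp h₂
    have hwalk : ∀ c, AT x c → ReflTransGen (Deg11Step (Restrict R S)) (φ x) (φ c) :=
      fun c hc => (hφ.adj_iff.mp hc).deg11Step_walk hx
    exact hne (hφ.1 trivial trivial
      (eq_of_deg11Step_walks (hwalk c₁ h₁) (ih c₁ h₁) (hwalk c₂ h₂) (ih c₂ h₂)))

lemma SubdivWitness.reach_of_isLCAIn {a b c : W} {y : V} (hφ : SubdivWitness R S AT Set.univ θ φ)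
    (ha : ¬ Deg11 (Restrict R S) (φ a)) (hb : ¬ Deg11 (Restrict R S) (φ b))
    (hc : IsLCAIn AT {a, b} c) (hya : ReflTransGen (Restrict R S) y (φ a))
    (hyb : ReflTransGen (Restrict R S) y (φ b)) : ReflTransGen (Restrict R S) y (φ c) := by
  obtain ⟨g, hyg, hg⟩ := exists_deg11Step_walk hya ha
  have hga := reach_of_deg11Step_walk hyg hya ha
  have hgb := reach_of_deg11Step_walk hyg hyb hb
  obtain ⟨z, -, rfl⟩ := hφ.2.2.1 g (mem_of_reach_restrict hga (hφ.2.1 a trivial)) hg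
  have hz : ∀ w, ReflTransGen (Restrict R S) (φ z) (φ w) → ¬ Deg11 (Restrict R S) (φ w) →
      ReflTransGen AT z w := fun w h hw => by
    obtain ⟨w', hw', hw'w⟩ := hφ.exists_reach_eq h hw
    rwa [hφ.1 trivial trivial hw'w] at hw'
  have hzc := hc.2 z (by rintro x (rfl | rfl); exacts [hz x hga ha, hz x hgb hb])
  exact (ReflTransGen.mono (fun _ _ h => h.1) _ _ hyg).trans (hφ.reach hzc)

theorem SubdivWitness.restrict_desc (hφ : SubdivWitness R S AT Set.univ θ φ)
    (huniq : ∀ a b y, Restrict R S a y → Restrict R S b y → a = b)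
    (hu : ¬ Deg11 (Restrict R S) (φ u)) :
    SubdivWitness (Restrict R S) (Desc (Restrict R S) (φ u)) AT (Desc AT u) θ φ := by
  refine ⟨hφ.1.mono (Set.subset_univ _), fun w hw => hφ.reach hw, ?_, ?_, ?_⟩
  · intro z hz hnd
    obtain ⟨w, hw, rfl⟩ :=
      hφ.exists_reach_eq hz fun hd => hnd ((deg11_restrict_desc_iff huniq hu hz).mpr hd)
    exact ⟨w, hw, rfl⟩
  · intro x hx y hy
    rw [subdivPath_restrict_desc_iff huniq hu (hφ.reach hx), ← hφ.adj_iff]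
    exact ⟨fun h => h.2.2, fun h => ⟨hx, hy, h⟩⟩
  · intro w hw h₀
    exact hφ.eq_of_outDeg (by rwa [outDeg_restrict hw fun c hc => hw.tail hc] at h₀)

lemma subdivWitness_congr {R' : V → V → Prop} {SW : Set W} (h : Restrict R S = Restrict R' S) :
    SubdivWitness R S AT SW θ φ ↔ SubdivWitness R' S AT SW θ φ := by
  unfold SubdivWitness
  rw [h]

end Subdivision

section Components

variable {A : V → V → Prop} {ρ : V} {C : Set V} {rC l x : V}

lemma IsTNC.isTreeNode_of_mem (hC : IsTNC A C) (hx : x ∈ C) : IsTreeNode A x := by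
  obtain ⟨u₀, hu₀, rfl⟩ := hC
  induction hx with
  | refl => exact hu₀
  | tail _ h _ => exact h.2.1

lemma CompRoot.treeReach_of_mem (hN : IsNetwork A ρ) (hC : IsTNC A C) (hrC : CompRoot A C rC)
    (hx : x ∈ C) : ReflTransGen (fun a b => A a b ∧ IsTreeNode A a) rC x := by
  obtain ⟨u₀, -, rfl⟩ := hC
  have : Std.Symm (TAdj A) := ⟨fun _ _ ⟨ha, hb, h⟩ => ⟨hb, ha, h.symm⟩⟩
  have hreach : ReflTransGen (TAdj A) rC x := (symm hrC.1).trans hx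
  clear hx
  induction hreach with
  | refl => exact .refl
  | @tail a b _ hab hra =>
    obtain ⟨ha, hb, hab | hba⟩ := hab
    · exact hra.tail ⟨hab, ha⟩
    rcases hra.cases_tail with rfl | ⟨c, hrc, hca, -⟩
    · exact absurd hba (hrC.2 b hb)
    · rwa [hN.eq_of_adj_of_not_isRet ha hba hca]

lemma reach_of_mem_LCset (hN : IsNetwork A ρ) (hC : IsTNC A C) (hrC : CompRoot A C rC)
    (hl : l ∈ LCset A C) : ReflTransGen A rC l := by
  have hreach : ∀ x ∈ C, ReflTransGen A rC x := fun x hx =>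
    ReflTransGen.mono (fun _ _ h => h.1) _ _ (hrC.treeReach_of_mem hN hC hx)
  rcases hl with ⟨hlC, -⟩ | ⟨r, ⟨hr, hrC'⟩, hrl⟩
  · exact hreach l hlC
  · obtain ⟨q, hq⟩ : ∃ q, A q r :=
      Set.nonempty_of_ncard_ne_zero (s := {q | A q r}) (by unfold IsRet inDeg at hr; omega)
    exact ((hreach q (hrC' q hq)).tail hq).tail hrl

lemma LowestBig.isLeaf_of_transGen (hC : LowestBig A C) (hrC : CompRoot A C rC)
    (hx : IsTreeNode A x) (hpar : ∀ a, IsTreeNode A a → ¬ A a x) (h : TransGen A rC x) :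
    IsLeaf A x := by
  obtain ⟨l, hl, hset⟩ := hC.2 _ x rC ⟨x, hx, rfl⟩ ⟨.refl, hpar⟩ hrC h
  have hxl : x ∈ ({l} : Set V) := hset ▸ ReflTransGen.refl
  exact (Set.mem_singleton_iff.mp hxl) ▸ hl

lemma LowestBig.parents_mem (hN : IsNetwork A ρ) (hC : LowestBig A C) (hrC : CompRoot A C rC)
    (hl : l ∈ LCset A C) (hleaf : IsLeaf A l) (hxl : ReflTransGen A x l) (hx : IsRet A x)
    (hrx : TransGen A rC x) : ∀ q, A q x → q ∈ C := by
  have := hN.finite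
  induction hxl using ReflTransGen.head_induction_on with
  | refl => exact absurd hx hleaf.not_isRet
  | @head x c hxc hcl ih =>
    by_cases hc : IsRet A c
    · exact absurd hx (hC.1.1.isTreeNode_of_mem (ih hc (hrx.tail hxc) x hxc))
    have hcx : ∀ a, A a c → a = x := fun a hac => hN.eq_of_adj_of_not_isRet hc hac hxc
    have hcleaf := hC.isLeaf_of_transGen hrC hc (fun a ha hac => ha (hcx a hac ▸ hx))
      (hrx.tail hxc)
    obtain rfl : c = l := by
      rcases hcl.cases_head with h | ⟨d, hcd, -⟩
      exacts [h, absurd hcd (not_adj_of_outDeg_eq_zero hcleaf.2)]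
    rcases hl with ⟨hcC, -⟩ | ⟨r, hr, hrc⟩
    · rcases (hrC.treeReach_of_mem hN hC.1.1 hcC).cases_tail with rfl | ⟨d, -, hdc, hd⟩
      · exact absurd (hrx.tail hxc) (hN.acyclic _)
      · exact absurd hx (hcx d hdc ▸ hd)
    · exact fun q hq => hr.2 q (hcx r hrc ▸ hq)

lemma LowestBig.reach_or_root_reach {B : V → V → Prop} (hN : IsNetwork A ρ)
    (hC : LowestBig A C) (hrC : CompRoot A C rC) (hB : ∀ a b, B a b → A a b)
    (hl : l ∈ LCset A C) (hleaf : IsLeaf A l) (h : ReflTransGen B x l) :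
    ReflTransGen A rC x ∨ ReflTransGen B rC l := by
  induction h using ReflTransGen.head_induction_on with
  | refl => exact .inl (reach_of_mem_LCset hN hC.1.1 hrC hl)
  | @head x c hxc hcl ih =>
    rcases ih with hrc | hrl
    · rcases hrc.cases_tail with rfl | ⟨z, hrz, hzc⟩
      · exact .inr hcl
      by_cases hzx : z = x
      · exact .inl (hzx ▸ hrz)
      have hxC := hC.parents_mem hN hrC hl hleaf (ReflTransGen.mono hB _ _ hcl)
        (hN.isRet_of_adj_of_ne hzc (hB _ _ hxc) hzx) (TransGen.tail' hrz hzc) x (hB _ _ hxc)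
      exact .inl (ReflTransGen.mono (fun _ _ h => h.1) _ _ (hrC.treeReach_of_mem hN hC.1.1 hxC))
    · exact .inr hrl

end Components

section Display

variable {A : V → V → Prop} {ρ : V} {AT : W → W → Prop} {ρT : W} {θ φ : W → V}
  {E : Set (V × V)} {D : Set V} {a b y : V}

/-- The graph `(N − E) − D` of the definition of display. -/
abbrev Pruned (A : V → V → Prop) (E : Set (V × V)) (D : Set V) : V → V → Prop :=
  Restrict (fun a b => Restrict A Set.univ a b ∧ (a, b) ∉ E) (Set.univ \ D)

lemma Pruned.adj (h : Pruned A E D a b) : A a b := h.2.2.1.2.2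

lemma Pruned.eq_of_adj (hN : IsNetwork A ρ)
    (hE : ∀ r, 2 ≤ inDeg A r → ∃ p, A p r ∧ (p, r) ∉ E ∧ ∀ q, A q r → q ≠ p → (q, r) ∈ E)
    (ha : Pruned A E D a y) (hb : Pruned A E D b y) : a = b := by
  by_cases hy : IsRet A y
  · obtain ⟨p, -, -, hp⟩ := hE y hy.1
    have hkept : ∀ q, Pruned A E D q y → q = p := fun q hq =>
      by_contra fun hne => hq.2.2.2 (hp q hq.adj hne)
    exact (hkept a ha).trans (hkept b hb).symm
  · exact hN.eq_of_adj_of_not_isRet hy ha.adj hb.adj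

lemma exists_retEdges_restrict [Finite V]
    (hE : ∀ r, 2 ≤ inDeg A r → ∃ p, A p r ∧ (p, r) ∉ E ∧ ∀ q, A q r → q ≠ p → (q, r) ∈ E)
    (S : Set V) :
    ∃ E' : Set (V × V), (∀ e ∈ E', Restrict A S e.1 e.2 ∧ 2 ≤ inDeg (Restrict A S) e.2) ∧
      (∀ r ∈ S, 2 ≤ inDeg (Restrict A S) r →
        ∃ p, Restrict A S p r ∧ (p, r) ∉ E' ∧ ∀ q, Restrict A S q r → q ≠ p → (q, r) ∈ E') ∧
      ∀ a b c, Restrict A S a b → Restrict A S c b → (c, b) ∉ E →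
        ((a, b) ∈ E' ↔ (a, b) ∈ E) := by
  -- `keep r` is the parent of `r` kept by `E` if that parent lies in `S`, another parent otherwise
  have hkeep : ∀ r, ∃ p, (∃ q, Restrict A S q r) → Restrict A S p r ∧
      ∀ c, Restrict A S c r → (c, r) ∉ E → (p, r) ∉ E := by
    intro r
    by_cases h : ∃ c, Restrict A S c r ∧ (c, r) ∉ E
    · obtain ⟨c, hc, hcE⟩ := h
      exact ⟨c, fun _ => ⟨hc, fun _ _ _ => hcE⟩⟩
    by_cases hq : ∃ q, Restrict A S q r
    · obtain ⟨q, hq⟩ := hq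
      exact ⟨q, fun _ => ⟨hq, fun c hc hcE => absurd ⟨c, hc, hcE⟩ h⟩⟩
    · exact ⟨r, fun h' => absurd h' hq⟩
  choose keep hkeep using hkeep
  refine ⟨{e | Restrict A S e.1 e.2 ∧ 2 ≤ inDeg (Restrict A S) e.2 ∧ e.1 ≠ keep e.2},
    fun e he => ⟨he.1, he.2.1⟩, fun r _ h₂ => ?_, fun a b c hab hcb hcE => ?_⟩
  · obtain ⟨q, hq⟩ : ∃ q, Restrict A S q r :=
      Set.nonempty_of_ncard_ne_zero (s := {q | Restrict A S q r}) (by unfold inDeg at h₂; omega)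
    exact ⟨keep r, (hkeep r ⟨q, hq⟩).1, fun h => h.2.2 rfl, fun q hq hne => ⟨hq, h₂, hne⟩⟩
  · have hE_iff : ∀ x, A x b → ((x, b) ∈ E ↔ x ≠ c) := by
      intro x hx
      by_cases h₂ : 2 ≤ inDeg A b
      · obtain ⟨p, -, hpE, hp⟩ := hE b h₂
        obtain rfl : c = p := by_contra fun hne => hcE (hp c hcb.2.2 hne)
        exact ⟨fun h hxc => hcE (hxc ▸ h), hp x hx⟩
      · obtain rfl : x = c := by_contra fun hne => h₂ (two_le_inDeg hx hcb.2.2 hne)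
        exact iff_of_false hcE (not_not.mpr rfl)
    have hkb : keep b = c := by
      obtain ⟨hkb, hkbE⟩ := hkeep b ⟨c, hcb⟩
      exact not_not.mp fun hne => hkbE c hcb hcE ((hE_iff _ hkb.2.2).mpr hne)
    simp only [Set.mem_ofPred_eq, hkb, hE_iff a hab.2.2]
    exact ⟨fun h => h.2.2, fun h => ⟨hab, two_le_inDeg hab hcb h, h⟩⟩

theorem displaysOn_of_desc_subset {S : Set V} (hN : IsNetwork A ρ) (hT : IsPhyloTree AT ρT)
    (hθ : ∀ w, IsLeaf AT w → IsLeaf A (θ w)) (hW : DisplayWitness A Set.univ AT Set.univ θ E D φ)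
    (u : W) (hS : Desc (Pruned A E D) (φ u) ⊆ S) : DisplaysOn A S AT (Desc AT u) θ := by
  have := hN.finite
  obtain ⟨-, hE, hφ⟩ := hW
  simp only [restrict_univ, Set.mem_univ, true_implies] at hE
  obtain ⟨E', hE'₁, hE'₂, hE'E⟩ := exists_retEdges_restrict hE S
  have hu : ¬ Deg11 (Pruned A E D) (φ u) :=
    hφ.not_deg11 hT (fun w hw _ h => not_adj_of_outDeg_eq_zero (hθ w hw).2 (Pruned.adj h)) u
  set S' := Desc (Pruned A E D) (φ u)
  have hS'D : S' ⊆ Set.univ \ D := desc_restrict_subset (hφ.2.1 u trivial)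
  have hS'E : ∀ a b, a ∈ S' → b ∈ S' → A a b → ((a, b) ∈ E' ↔ (a, b) ∈ E) := by
    intro a b ha hb hab
    rcases hb.cases_tail with rfl | ⟨c, hc, hcb⟩
    · exact absurd (TransGen.tail' (ReflTransGen.mono (fun _ _ h => h.adj) _ _ ha) hab)
        (hN.acyclic _)
    · exact hE'E a b c ⟨hS ha, hS hb, hab⟩ ⟨hS hc, hS hb, hcb.adj⟩ hcb.2.2.2
  refine ⟨E', S'ᶜ, φ, hE'₁, hE'₂, ?_⟩
  rw [Set.sdiff_compl, Set.inter_eq_right.mpr hS, subdivWitness_congr (R' := Pruned A E D)]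
  · exact hφ.restrict_desc (fun _ _ _ => Pruned.eq_of_adj hN hE) hu
  funext a b
  apply propext
  constructor
  · rintro ⟨ha, hb, ⟨-, -, hab⟩, hE'ab⟩
    exact ⟨ha, hb, hS'D ha, hS'D hb, ⟨trivial, trivial, hab⟩,
      fun h => hE'ab ((hS'E a b ha hb hab).mpr h)⟩
  · rintro ⟨ha, hb, -, -, ⟨-, -, hab⟩, hEab⟩
    exact ⟨ha, hb, ⟨hS ha, hS hb, hab⟩, fun h => hEab ((hS'E a b ha hb hab).mp h)⟩

lemma LowestBig.reach_image_of_isLCAIn {C : Set V} {rC : V} {a b c : W} (hN : IsNetwork A ρ)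
    (hC : LowestBig A C) (hrC : CompRoot A C rC) (hθ : ∀ w, IsLeaf AT w → IsLeaf A (θ w))
    (hφ : SubdivWitness (fun a b => Restrict A Set.univ a b ∧ (a, b) ∉ E) (Set.univ \ D) AT
      Set.univ θ φ)
    (ha : IsLeaf AT a) (hb : IsLeaf AT b) (haC : θ a ∈ LCset A C) (hbC : θ b ∈ LCset A C)
    (hc : IsLCAIn AT {a, b} c) : ReflTransGen A rC (φ c) := by
  have := hN.finite
  have hleaf : ∀ w, IsLeaf AT w → φ w = θ w := fun w hw => hφ.eq_of_outDeg hw.2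
  have hnd : ∀ w, IsLeaf AT w → ¬ Deg11 (Pruned A E D) (φ w) := fun w hw hd => by
    obtain ⟨z, hz⟩ := exists_adj_of_outDeg_eq_one hd.2
    exact not_adj_of_outDeg_eq_zero (hθ w hw).2 (hleaf w hw ▸ hz.adj)
  have hca : ReflTransGen (Pruned A E D) (φ c) (θ a) := hleaf a ha ▸ hφ.reach (hc.1 a (by simp))
  have hcb : ReflTransGen (Pruned A E D) (φ c) (θ b) := hleaf b hb ▸ hφ.reach (hc.1 b (by simp))
  rcases hC.reach_or_root_reach hN hrC (fun _ _ h => h.adj) haC (hθ a ha) hca with h | hra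
  · exact h
  rcases hC.reach_or_root_reach hN hrC (fun _ _ h => h.adj) hbC (hθ b hb) hcb with h | hrb
  · exact h
  exact ReflTransGen.mono (fun _ _ h => Pruned.adj h) _ _
    (hφ.reach_of_isLCAIn (hnd a ha) (hnd b hb) hc (hleaf a ha ▸ hra) (hleaf b hb ▸ hrb))

end Display

theorem lowest_component_displays_subtree_general {V W : Type} (A : V → V → Prop) (ρ : V)
    (hN : IsNetwork A ρ)
    (C : Set V) (rC : V) (hC : LowestBig A C) (hrC : CompRoot A C rC)
    (AT : W → W → Prop) (ρT : W) (hT : IsPhyloTree AT ρT)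
    (θ : W → V) (hθ : Set.BijOn θ {w | IsLeaf AT w} {v | IsLeaf A v})
    (ℓ : V) (hℓ : ℓ ∈ LCset A C)
    (wl : W) (hwl : IsLeaf AT wl) (hθwl : θ wl = ℓ)
    (t : ℕ) (v : ℕ → W) (hvlast : v (t + 1) = wl)
    (hpath : ∀ i, 1 ≤ i → i ≤ t → AT (v i) (v (i + 1)))
    (Hit : ℕ → Prop)
    (hHit : ∀ s, Hit s ↔ ∃ w, IsLeaf AT w ∧ Relation.ReflTransGen AT (v s) w ∧
        (s ≤ t → ¬ Relation.ReflTransGen AT (v (s + 1)) w) ∧ θ w ∈ LCset A C)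
    (sC : ℕ) (hsC1 : 1 ≤ sC) (hsC2 : sC ≤ t + 1) (hsChit : Hit sC)
    (hdisp : DisplaysOn A Set.univ AT Set.univ θ) :
    DisplaysOn A (Desc A rC) AT (Desc AT (v sC)) θ := by
  obtain ⟨E, D, φ, hW⟩ := hdisp
  have hθleaf : ∀ w, IsLeaf AT w → IsLeaf A (θ w) := fun _ hw => hθ.mapsTo hw
  have hreach : ReflTransGen A rC (φ (v sC)) := by
    rcases hsC2.lt_or_eq with hlt | rfl
    · obtain ⟨w, hw, hsw, hnot, hwC⟩ := (hHit sC).mp hsChit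
      have hlca : IsLCAIn AT {w, wl} (v sC) :=
        isLCAIn_of_branch hT.eq_of_adj hT.1.acyclic (hpath sC hsC1 (by omega)) hsw
          (hnot (by omega)) (hvlast ▸ reach_of_chain hpath (by omega) (by omega) le_rfl)
      exact hC.reach_image_of_isLCAIn hN hrC hθleaf hW.2.2 hw hwl hwC (hθwl ▸ hℓ) hlca
    · rw [hvlast, hW.2.2.eq_of_outDeg hwl.2, hθwl]
      exact reach_of_mem_LCset hN hC.1.1 hrC hℓ
  exact displaysOn_of_desc_subset hN hT hθleaf hW (v sC)
    fun y hy => hreach.trans (ReflTransGen.mono (fun _ _ h => Pruned.adj h) _ _ hy)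

/-- Let `N` be a binary reticulation-visible network, `C` a lowest big tree node
component with root `rC`, `T` a binary phylogenetic tree with the same leaves as `N`
(via the leaf correspondence `θ`), `ℓ ∈ L_C`, and `v 1, …, v (t+1)` the path in `T`
from the root to (the tree leaf corresponding to) `ℓ`.  Let `s_C` be the least `s`
such that the subtree branching off the path at `v s` contains a leaf of `L_C`.
If `N` displays `T`, then the subnetwork `D_N(ρ(C))` displays the subtree
`D_T(v s_C)`. -/
theorem lowest_component_displays_subtree {V W : Type} (A : V → V → Prop) (ρ : V)
    (hN : IsNetwork A ρ) (hbin : IsBinary A ρ) (hRV : RetVisible A ρ)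
    (C : Set V) (rC : V) (hC : LowestBig A C) (hrC : CompRoot A C rC)
    (AT : W → W → Prop) (ρT : W) (hT : IsPhyloTree AT ρT) (hbinT : IsBinary AT ρT)
    (θ : W → V) (hθ : Set.BijOn θ {w | IsLeaf AT w} {v | IsLeaf A v})
    (ℓ : V) (hℓ : ℓ ∈ LCset A C)
    (wl : W) (hwl : IsLeaf AT wl) (hθwl : θ wl = ℓ)
    (t : ℕ) (v : ℕ → W) (hv1 : v 1 = ρT) (hvlast : v (t + 1) = wl)
    (hpath : ∀ i, 1 ≤ i → i ≤ t → AT (v i) (v (i + 1)))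
    (Hit : ℕ → Prop)
    (hHit : ∀ s, Hit s ↔ ∃ w, IsLeaf AT w ∧ Relation.ReflTransGen AT (v s) w ∧
        (s ≤ t → ¬ Relation.ReflTransGen AT (v (s + 1)) w) ∧ θ w ∈ LCset A C)
    (sC : ℕ) (hsC1 : 1 ≤ sC) (hsC2 : sC ≤ t + 1) (hsChit : Hit sC)
    (hsCmin : ∀ s, 1 ≤ s → s < sC → ¬ Hit s)
    (hdisp : DisplaysOn A Set.univ AT Set.univ θ) :
    DisplaysOn A (Desc A rC) AT (Desc AT (v sC)) θ :=
  lowest_component_displays_subtree_general A ρ hN C rC hC hrC AT ρT hT θ hθ ℓ hℓ wl hwl hθwl t v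
    hvlast hpath Hit hHit sC hsC1 hsC2 hsChit hdisp

end PhyloNet
end
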